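/- arXiv:1403.2911 — 3 statements merged into one kernel-verified Lean document; each statement's English description precedes it below -/
import Mathlib

section
/- For every integer $k \geq 3$ and every $s$ with $0 \leq s \leq k$, the graph $G_k$ belongs to the class $\mathcal{C}(k, s)$; that is, the vertex set of $G_k$ can be partitioned into $s$ cliques and $k - s$ independent sets. -/
/-- Vertex set of `G_k`: subsets of `[k]` of size one or two. -/
def GVert (k : ℕ) : Type := {S : Finset (Fin k) // S.card = 1 ∨ S.card = 2}

/-- The graph `G_k`: two such subsets are adjacent iff they intersect. -/
def Gk (k : ℕ) : SimpleGraph (GVert k) :=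
  SimpleGraph.fromRel (fun S T => (S.1 ∩ T.1).Nonempty)

lemma GVert.ne' {k : ℕ} (v : GVert k) : v.1.Nonempty :=
  Finset.card_pos.mp (by rcases v.2 with h | h <;> omega)

/-- The coloring value. -/
def cfun (k s : ℕ) (v : GVert k) : ℕ :=
  if (v.1.min' v.ne').val < s then (v.1.min' v.ne').val
  else s + ((3 - v.1.card) * (∑ x ∈ v.1, (x.val - s))) % (k - s)

lemma cfun_lt (k s : ℕ) (v : GVert k) : cfun k s v < k := by
  unfold cfun
  split_ifs with h
  · exact (v.1.min' v.ne').isLt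
  · have h1 : s ≤ (v.1.min' v.ne').val := le_of_not_gt h
    have h2 : (v.1.min' v.ne').val < k := (v.1.min' v.ne').isLt
    have hm : 0 < k - s := by omega
    have := Nat.mod_lt ((3 - v.1.card) * (∑ x ∈ v.1, (x.val - s))) hm
    omega

lemma pair_struct {k : ℕ} {S : Finset (Fin k)} (h : S.card = 2) {x : Fin k}
    (hx : x ∈ S) : ∃ y, x ≠ y ∧ S = {x, y} := by
  rcases Finset.card_eq_two.mp h with ⟨a, b, hab, rfl⟩
  rcases Finset.mem_insert.mp hx with rfl | hx
  · exact ⟨b, hab, rfl⟩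
  · rcases Finset.mem_singleton.mp hx with rfl
    exact ⟨a, Ne.symm hab, Finset.pair_comm a x⟩

/-- for every `k ≥ 3` and `0 ≤ s ≤ k`, the graph `G_k` lies in `C(k, s)`:
its vertex set can be partitioned into `s` cliques and `k - s` independent sets. -/
theorem stmt0 (k s : ℕ) (hk : 3 ≤ k) (hs : s ≤ k) :
    ∃ c : GVert k → Fin k, ∀ i : Fin k,
      if i.val < s then (Gk k).IsClique {v | c v = i}
      else {v | c v = i}.Pairwise (fun u v => ¬ (Gk k).Adj u v) := by
  refine ⟨fun v => ⟨cfun k s v, cfun_lt k s v⟩, fun i => ?_⟩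
  split_ifs with hi
  · -- clique case: all members have the same minimum `i`
    intro u hu v hv huv
    have hu' : cfun k s u = i.val := congrArg Fin.val hu
    have hv' : cfun k s v = i.val := congrArg Fin.val hv
    have hmu : (u.1.min' u.ne').val = i.val := by
      unfold cfun at hu'; split_ifs at hu' with h
      · exact hu'
      · omega
    have hmv : (v.1.min' v.ne').val = i.val := by
      unfold cfun at hv'; split_ifs at hv' with h
      · exact hv'
      · omega
    have hmm : u.1.min' u.ne' = v.1.min' v.ne' := Fin.ext (hmu.trans hmv.symm)
    refine ⟨huv, Or.inl ⟨u.1.min' u.ne', Finset.mem_inter.mpr ⟨u.1.min'_mem u.ne', ?_⟩⟩⟩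
    rw [hmm]; exact v.1.min'_mem v.ne'
  · -- independent set case
    push_neg at hi
    intro u hu v hv huv hadj
    have hu' : cfun k s u = i.val := congrArg Fin.val hu
    have hv' : cfun k s v = i.val := congrArg Fin.val hv
    obtain ⟨hne, hor⟩ := hadj
    have hcom : ∃ a, a ∈ u.1 ∧ a ∈ v.1 := by
      rcases hor with ⟨a, ha⟩ | ⟨a, ha⟩
      · rcases Finset.mem_inter.mp ha with ⟨h1, h2⟩; exact ⟨a, h1, h2⟩
      · rcases Finset.mem_inter.mp ha with ⟨h1, h2⟩; exact ⟨a, h2, h1⟩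
    obtain ⟨a, hau, hav⟩ := hcom
    -- both colors are in the second branch
    unfold cfun at hu' hv'
    split_ifs at hu' with h1
    · omega
    split_ifs at hv' with h2
    · omega
    push_neg at h1 h2
    have hus : ∀ x ∈ u.1, s ≤ x.val := fun x hx => le_trans h1 (u.1.min'_le x hx)
    have hvs : ∀ x ∈ v.1, s ≤ x.val := fun x hx => le_trans h2 (v.1.min'_le x hx)
    set m := k - s with hm
    have hm0 : 0 < m := by have := a.isLt; have := hus a hau; omega
    have hE : ((3 - u.1.card) * (∑ x ∈ u.1, (x.val - s))) % m
        = ((3 - v.1.card) * (∑ x ∈ v.1, (x.val - s))) % m := by omega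
    have hfa : a.val - s < m := by have := a.isLt; have := hus a hau; omega
    -- helper facts
    have key12 : ∀ (w z : GVert k), w.1 = {a} → z.1.card = 2 → a ∈ z.1 →
        ((3 - w.1.card) * (∑ x ∈ w.1, (x.val - s))) % m
          = ((3 - z.1.card) * (∑ x ∈ z.1, (x.val - s))) % m →
        (∀ x ∈ z.1, s ≤ x.val) → False := by
      intro w z hw hz haz hEq hzs
      obtain ⟨y, hay, hzy⟩ := pair_struct hz haz
      have hy : y ∈ z.1 := by rw [hzy]; exact Finset.mem_insert_of_mem (Finset.mem_singleton_self y)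
      have hfy : y.val - s < m := by have := y.isLt; have := hzs y hy; omega
      rw [hw, hzy] at hEq
      rw [Finset.sum_singleton, Finset.sum_pair hay, Finset.card_singleton,
        Finset.card_pair hay] at hEq
      norm_num at hEq
      have h2p : 2 * (a.val - s) = (a.val - s) + (a.val - s) := by ring
      rw [h2p] at hEq
      have hmod : ((a.val - s) + (a.val - s)) % m = ((a.val - s) + (y.val - s)) % m := hEq
      have : (a.val - s) % m = (y.val - s) % m :=
        Nat.ModEq.add_left_cancel' (a.val - s) hmod
      rw [Nat.mod_eq_of_lt hfa, Nat.mod_eq_of_lt hfy] at this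
      have : a.val = y.val := by have := hzs y hy; have := hus a hau; omega
      exact hay (Fin.ext this)
    rcases u.2 with hcu | hcu <;> rcases v.2 with hcv | hcv
    · -- both singletons: equal, contradiction
      obtain ⟨x, hx⟩ := Finset.card_eq_one.mp hcu
      obtain ⟨y, hy⟩ := Finset.card_eq_one.mp hcv
      have hax : a = x := Finset.mem_singleton.mp (by rw [← hx]; exact hau)
      have hay : a = y := Finset.mem_singleton.mp (by rw [← hy]; exact hav)
      exact hne (Subtype.ext (by rw [hx, hy, ← hax, ← hay]))
    · -- u singleton, v pair
      obtain ⟨x, hx⟩ := Finset.card_eq_one.mp hcu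
      have hax : a = x := Finset.mem_singleton.mp (by rw [← hx]; exact hau)
      have hxa : u.1 = {a} := by rw [hx, ← hax]
      exact key12 u v hxa hcv hav hE hvs
    · -- u pair, v singleton
      obtain ⟨x, hx⟩ := Finset.card_eq_one.mp hcv
      have hax : a = x := Finset.mem_singleton.mp (by rw [← hx]; exact hav)
      have hxa : v.1 = {a} := by rw [hx, ← hax]
      exact key12 v u hxa hcu hau hE.symm hus
    · -- both pairs
      obtain ⟨y, hay, huy⟩ := pair_struct hcu hau
      obtain ⟨z, haz, hvz⟩ := pair_struct hcv hav
      have hyu : y ∈ u.1 := by rw [huy]; exact Finset.mem_insert_of_mem (Finset.mem_singleton_self y)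
      have hzv : z ∈ v.1 := by rw [hvz]; exact Finset.mem_insert_of_mem (Finset.mem_singleton_self z)
      have hfy : y.val - s < m := by have := y.isLt; have := hus y hyu; omega
      have hfz : z.val - s < m := by have := z.isLt; have := hvs z hzv; omega
      rw [huy, hvz, Finset.sum_pair hay, Finset.sum_pair haz,
        Finset.card_pair hay, Finset.card_pair haz] at hE
      norm_num at hE
      have hmod : ((a.val - s) + (y.val - s)) % m = ((a.val - s) + (z.val - s)) % m := hE
      have : (y.val - s) % m = (z.val - s) % m :=
        Nat.ModEq.add_left_cancel' (a.val - s) hmod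
      rw [Nat.mod_eq_of_lt hfy, Nat.mod_eq_of_lt hfz] at this
      have hyz : y = z := Fin.ext (by have := hus y hyu; have := hvs z hzv; omega)
      exact hne (Subtype.ext (by rw [huy, hvz, hyz]))
end

section
/- The graph $G_3$ (the complement of a triangle with a pendant edge attached to each vertex, on 6 vertices) is not an incomparability graph: there is no partial order on its 6 vertices whose incomparability graph is $G_3$. -/
def gv (S : Finset (Fin 3)) (h : S.card = 1 ∨ S.card = 2) : GVert 3 := ⟨S, h⟩

lemma gk3_adj (x y : GVert 3) :
    (Gk 3).Adj x y ↔ x.1 ≠ y.1 ∧ (x.1 ∩ y.1).Nonempty := by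
  rw [Gk, SimpleGraph.fromRel_adj]
  constructor
  · rintro ⟨hne, h | h⟩
    · exact ⟨fun hh => hne (Subtype.ext hh), h⟩
    · exact ⟨fun hh => hne (Subtype.ext hh), by rwa [Finset.inter_comm]⟩
  · rintro ⟨hne, h⟩
    exact ⟨fun hh => hne (congrArg Subtype.val hh), Or.inl h⟩

/-- the graph `G₃` (on 6 vertices: the complement of a triangle with a
pendant edge attached to each vertex) is not an incomparability graph: there is no
partial order (irreflexive transitive relation) on its vertices whose incomparability
graph is `G₃`. -/
theorem stmt7 :
    ¬ ∃ r : GVert 3 → GVert 3 → Prop, (∀ x, ¬ r x x) ∧ Transitive r ∧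
      ∀ x y, x ≠ y → ((Gk 3).Adj x y ↔ (¬ r x y ∧ ¬ r y x)) := by
  rintro ⟨r, hirr, htrans, hadj⟩
  -- the six vertices
  set a1 : GVert 3 := gv {0} (by decide) with ha1
  set a2 : GVert 3 := gv {1} (by decide) with ha2
  set a3 : GVert 3 := gv {2} (by decide) with ha3
  set p12 : GVert 3 := gv {0, 1} (by decide) with hp12
  set p13 : GVert 3 := gv {0, 2} (by decide) with hp13
  set p23 : GVert 3 := gv {1, 2} (by decide) with hp23
  have hne : ∀ x y : GVert 3, x.1 ≠ y.1 → x ≠ y :=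
    fun x y h hh => h (congrArg Subtype.val hh)
  -- comparability of non-adjacent vertices
  have comp : ∀ x y : GVert 3, x.1 ≠ y.1 → ¬ (x.1 ∩ y.1).Nonempty → r x y ∨ r y x := by
    intro x y h1 h2
    have h := (hadj x y (hne x y h1)).mpr
    by_contra hc
    push_neg at hc
    exact h2 ((gk3_adj x y).mp (h ⟨hc.1, hc.2⟩)).2
  -- incomparability of adjacent vertices
  have incomp : ∀ x y : GVert 3, x.1 ≠ y.1 → (x.1 ∩ y.1).Nonempty → ¬ r x y ∧ ¬ r y x := by
    intro x y h1 h2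
    exact (hadj x y (hne x y h1)).mp ((gk3_adj x y).mpr ⟨h1, h2⟩)
  -- key lemma: if x < y < z and w is adjacent to x and z but not to y, contradiction
  have key : ∀ x y z w : GVert 3,
      w.1 ≠ x.1 → (w.1 ∩ x.1).Nonempty → w.1 ≠ z.1 → (w.1 ∩ z.1).Nonempty →
      w.1 ≠ y.1 → ¬ (w.1 ∩ y.1).Nonempty → r x y → r y z → False := by
    intro x y z w hwx1 hwx2 hwz1 hwz2 hwy1 hwy2 hxy hyz
    rcases comp w y hwy1 hwy2 with h | h
    · exact (incomp w z hwz1 hwz2).1 (htrans h hyz)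
    · exact (incomp w x hwx1 hwx2).2 (htrans hxy h)
  rcases comp a1 a2 (by decide) (by decide) with h12 | h21 <;>
    rcases comp a1 a3 (by decide) (by decide) with h13 | h31 <;>
    rcases comp a2 a3 (by decide) (by decide) with h23 | h32
  · exact key a1 a2 a3 p13 (by decide) (by decide) (by decide) (by decide)
      (by decide) (by decide) h12 h23
  · exact key a1 a3 a2 p12 (by decide) (by decide) (by decide) (by decide)
      (by decide) (by decide) h13 h32
  · exact hirr a3 (htrans h31 (htrans h12 h23))
  · exact key a3 a1 a2 p23 (by decide) (by decide) (by decide) (by decide)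
      (by decide) (by decide) h31 h12
  · exact key a2 a1 a3 p23 (by decide) (by decide) (by decide) (by decide)
      (by decide) (by decide) h21 h13
  · exact hirr a2 (htrans h21 (htrans h13 h32))
  · exact key a2 a3 a1 p12 (by decide) (by decide) (by decide) (by decide)
      (by decide) (by decide) h23 h31
  · exact key a3 a2 a1 p13 (by decide) (by decide) (by decide) (by decide)
      (by decide) (by decide) h32 h21
end

section
/- For $k \geq 3$, the vertex set of $G_k$ can be partitioned into sets $V_1, \dots, V_{k-1}$ where $V_1 = \{\{1\}, \{2\}, \{3\}\}$ induces an independent set, $V_2 = \{\{1,2\},\{1,3\},\{2,3\}\}$ induces a triangle (complete graph $K_3$), and for $3 \leq \ell \leq k-1$, $V_\ell = \{\{\ell+1, j\} : 1 \leq j \leq \ell+1\}$ (where $\{\ell+1,\ell+1\}$ means $\{\ell+1\}$) induces a complete graph on $\ell + 1$ vertices. -/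
namespace GVert

variable {k : ℕ}

theorem nonempty (v : GVert k) : v.1.Nonempty :=
  Finset.card_pos.mp (by rcases v.2 with h | h <;> omega)

def max (v : GVert k) : Fin k := v.1.max' v.nonempty

def min (v : GVert k) : Fin k := v.1.min' v.nonempty

theorem max_mem (v : GVert k) : v.max ∈ v.1 := v.1.max'_mem _

theorem le_max (v : GVert k) {a : Fin k} (ha : a ∈ v.1) : a ≤ v.max := v.1.le_max' a ha

theorem forall_val_lt_iff (v : GVert k) (n : ℕ) : (∀ a ∈ v.1, a.val < n) ↔ v.max.val < n :=
  ⟨fun h => h _ v.max_mem, fun h _ ha => lt_of_le_of_lt (Fin.le_def.mp (v.le_max ha)) h⟩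

theorem mem_and_forall_le_iff (v : GVert k) (m : Fin k) :
    (m ∈ v.1 ∧ ∀ b ∈ v.1, b.val ≤ m.val) ↔ v.max = m := by
  constructor
  · rintro ⟨hm, hle⟩
    exact le_antisymm (v.1.max'_le _ _ hle) (v.le_max hm)
  · rintro rfl
    exact ⟨v.max_mem, fun b hb => v.le_max hb⟩

def pair (m j : Fin k) : GVert k :=
  ⟨{m, j}, by
    by_cases h : m = j
    · simp [h]
    · exact Or.inr (Finset.card_pair h)⟩

theorem pair_injective (m : Fin k) : Function.Injective (pair m) := by
  intro j j' h
  have hpair : ({m, j} : Finset (Fin k)) = {m, j'} := congrArg Subtype.val h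
  have hj : j ∈ ({m, j'} : Finset (Fin k)) := hpair ▸ by simp
  have hj' : j' ∈ ({m, j} : Finset (Fin k)) := hpair ▸ by simp
  simp only [Finset.mem_insert, Finset.mem_singleton] at hj hj'
  grind

theorem max_pair {m j : Fin k} (h : j ≤ m) : (pair m j).max = m := by
  simp [max, pair, h]

theorem eq_pair_max_min (v : GVert k) : v = pair v.max v.min := by
  apply Subtype.ext
  rcases v.2 with h | h
  · obtain ⟨a, ha⟩ := Finset.card_eq_one.mp h
    simp [pair, max, min, ha]
  · have hne : v.max ≠ v.min := (v.1.min'_lt_max'_of_card (by omega)).ne'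
    refine (Finset.eq_of_subset_of_card_le ?_ ?_).symm
    · simp only [pair, Finset.insert_subset_iff, Finset.singleton_subset_iff]
      exact ⟨v.max_mem, v.1.min'_mem _⟩
    · simp [pair, Finset.card_pair hne, h]

theorem setOf_max_eq (m : Fin k) : {v : GVert k | v.max = m} = pair m '' Set.Iic m := by
  ext v
  constructor
  · rintro (rfl : v.max = m)
    exact ⟨v.min, v.1.min'_le_max' _, (eq_pair_max_min v).symm⟩
  · rintro ⟨j, hj, rfl⟩
    exact max_pair hj

theorem ncard_setOf_max_eq (m : Fin k) : {v : GVert k | v.max = m}.ncard = m.val + 1 := by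
  rw [setOf_max_eq, Set.ncard_image_of_injective _ (pair_injective m), ← Finset.coe_Iic,
    Set.ncard_coe_finset, Fin.card_Iic]

theorem ncard_setOf_card_eq_and_subset {n : ℕ} (hn : n = 1 ∨ n = 2) (s : Finset (Fin k)) :
    {v : GVert k | v.1.card = n ∧ v.1 ⊆ s}.ncard = s.card.choose n := by
  have hinj : Function.Injective fun v : GVert k => v.1 := fun u v h => Subtype.ext h
  have himage :
      (fun v : GVert k => v.1) '' {v | v.1.card = n ∧ v.1 ⊆ s} = ↑(s.powersetCard n) := by
    ext t
    simp only [Set.mem_image, Finset.mem_coe, Finset.mem_powersetCard]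
    constructor
    · rintro ⟨v, ⟨hcard, hsub⟩, rfl⟩
      exact ⟨hsub, hcard⟩
    · rintro ⟨hsub, hcard⟩
      exact ⟨⟨t, hcard ▸ hn⟩, ⟨hcard, hsub⟩, rfl⟩
  rw [← Set.ncard_image_of_injective _ hinj, himage, Set.ncard_coe_finset,
    Finset.card_powersetCard]

end GVert

section Adjacency

variable {k : ℕ}

theorem Gk_adj_iff (u v : GVert k) : (Gk k).Adj u v ↔ u ≠ v ∧ (u.1 ∩ v.1).Nonempty := by
  rw [Gk, SimpleGraph.fromRel_adj, Finset.inter_comm v.1, or_self]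

theorem Gk_isClique_of_forall_mem (S : Set (GVert k)) (a : Fin k) (h : ∀ v ∈ S, a ∈ v.1) :
    (Gk k).IsClique S :=
  fun u hu v hv huv => (Gk_adj_iff u v).mpr ⟨huv, a, Finset.mem_inter.mpr ⟨h u hu, h v hv⟩⟩

theorem Gk_isClique_of_subset (S : Set (GVert k)) (s : Finset (Fin k))
    (hsub : ∀ v ∈ S, v.1 ⊆ s)
    (hcard : ∀ u ∈ S, ∀ v ∈ S, s.card < u.1.card + v.1.card) :
    (Gk k).IsClique S := fun u hu v hv huv =>
  (Gk_adj_iff u v).mpr ⟨huv,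
    Finset.inter_nonempty_of_card_lt_card_add_card (hsub u hu) (hsub v hv) (hcard u hu v hv)⟩

theorem Gk_not_adj_of_card_eq_one {u v : GVert k} (hu : u.1.card = 1) (hv : v.1.card = 1) :
    ¬ (Gk k).Adj u v := by
  intro h
  obtain ⟨huv, a, ha⟩ := (Gk_adj_iff u v).mp h
  obtain ⟨b, hb⟩ := Finset.card_eq_one.mp hu
  obtain ⟨c, hc⟩ := Finset.card_eq_one.mp hv
  rw [Finset.mem_inter, hb, hc, Finset.mem_singleton, Finset.mem_singleton] at ha
  exact huv (Subtype.ext (by rw [hb, hc, ← ha.1, ha.2]))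

end Adjacency

section Colouring

variable {k : ℕ}

def colourVal (v : GVert k) : ℕ :=
  if v.max.val < 3 then v.1.card - 1 else v.max.val - 1

theorem colourVal_lt (hk : 3 ≤ k) (v : GVert k) : colourVal v < k - 1 := by
  have := v.max.isLt
  unfold colourVal
  split_ifs <;> rcases v.2 with h | h <;> omega

def colour (hk : 3 ≤ k) (v : GVert k) : Fin (k - 1) := ⟨colourVal v, colourVal_lt hk v⟩

theorem colourVal_eq_iff_of_lt_two (v : GVert k) {n : ℕ} (hn : n < 2) :
    colourVal v = n ↔ v.1.card = n + 1 ∧ v.max.val < 3 := by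
  unfold colourVal
  split_ifs with h <;> rcases v.2 with hc | hc <;> omega

theorem colourVal_eq_iff_of_two_le (v : GVert k) {n : ℕ} (hn : 2 ≤ n) :
    colourVal v = n ↔ v.max.val = n + 1 := by
  unfold colourVal
  split_ifs with h <;> rcases v.2 with hc | hc <;> omega

theorem setOf_colour_eq_of_lt_two (hk : 3 ≤ k) {n : ℕ} (hn : n < 2) (hn' : n < k - 1) :
    {v : GVert k | colour hk v = ⟨n, hn'⟩} =
      {v | v.1.card = n + 1 ∧ ∀ a ∈ v.1, a.val < 3} := by
  ext v
  simp only [Set.mem_ofPred_eq, colour, Fin.mk.injEq, colourVal_eq_iff_of_lt_two v hn,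
    GVert.forall_val_lt_iff]

theorem setOf_colour_eq_of_two_le (hk : 3 ≤ k) (i : Fin (k - 1)) (hi : 2 ≤ i.val) :
    {v : GVert k | colour hk v = i} = {v | v.max = ⟨i.val + 1, by omega⟩} := by
  ext v
  simp only [Set.mem_ofPred_eq, Fin.ext_iff, colour, colourVal_eq_iff_of_two_le v hi]

end Colouring

/-- for `k ≥ 3`, the vertex set of `G_k` can be partitioned into parts
`V_1, …, V_{k-1}` (indexed here by `Fin (k-1)`, `0`-based), where `V_1 = {{1},{2},{3}}`
is independent, `V_2 = {{1,2},{1,3},{2,3}}` induces a triangle, and for `3 ≤ ℓ ≤ k-1`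
the part `V_ℓ = {{ℓ+1, j} : 1 ≤ j ≤ ℓ+1}` (with `{ℓ+1,ℓ+1}` meaning `{ℓ+1}`) induces a
complete graph on `ℓ + 1` vertices. -/
theorem stmt11 (k : ℕ) (hk : 3 ≤ k) :
    ∃ c : GVert k → Fin (k - 1),
      ({v : GVert k | c v = ⟨0, by omega⟩} =
          {v : GVert k | v.1.card = 1 ∧ ∀ a ∈ v.1, a.val < 3}) ∧
      ({v : GVert k | c v = ⟨0, by omega⟩}.Pairwise fun u v => ¬ (Gk k).Adj u v) ∧
      ({v : GVert k | c v = ⟨1, by omega⟩} =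
          {v : GVert k | v.1.card = 2 ∧ ∀ a ∈ v.1, a.val < 3}) ∧
      (Gk k).IsClique {v : GVert k | c v = ⟨1, by omega⟩} ∧
      ({v : GVert k | c v = ⟨1, by omega⟩}.ncard = 3) ∧
      ∀ i : Fin (k - 1), 2 ≤ i.val →
        ({v : GVert k | c v = i} =
            {v : GVert k | (⟨i.val + 1, by have := i.isLt; omega⟩ : Fin k) ∈ v.1 ∧
              ∀ b ∈ v.1, b.val ≤ i.val + 1}) ∧
        (Gk k).IsClique {v : GVert k | c v = i} ∧
        {v : GVert k | c v = i}.ncard = i.val + 2 := by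
  let low : Finset (Fin k) := {a | a.val < 3}
  have hlow : low.card = 3 := by simp [low, Fin.card_filter_val_lt, hk]
  have hV₀ := setOf_colour_eq_of_lt_two hk (n := 0) (by norm_num) (by omega)
  have hV₁ := setOf_colour_eq_of_lt_two hk (n := 1) (by norm_num) (by omega)
  have hV₁' :
      {v : GVert k | colour hk v = ⟨1, by omega⟩} = {v | v.1.card = 2 ∧ v.1 ⊆ low} := by
    rw [hV₁]; ext v; simp [low, Finset.subset_iff]
  refine ⟨colour hk, hV₀, ?_, hV₁, ?_, ?_, fun i hi => ⟨?_, ?_, ?_⟩⟩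
  · rw [hV₀]
    exact fun u hu v hv _ => Gk_not_adj_of_card_eq_one hu.1 hv.1
  · rw [hV₁']
    exact Gk_isClique_of_subset _ low (fun v hv => hv.2)
      (fun u hu v hv => by rw [hu.1, hv.1, hlow]; norm_num)
  · rw [hV₁', GVert.ncard_setOf_card_eq_and_subset (Or.inr rfl), hlow]; rfl
  · rw [setOf_colour_eq_of_two_le hk i hi]; ext v; exact (GVert.mem_and_forall_le_iff v _).symm
  · rw [setOf_colour_eq_of_two_le hk i hi]
    exact Gk_isClique_of_forall_mem _ _ fun v (hv : v.max = _) => hv ▸ v.max_mem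
  · rw [setOf_colour_eq_of_two_le hk i hi, GVert.ncard_setOf_max_eq]
end
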